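/- If u ∈ C¹(ℝⁿ) and for every unit vector e with e ⊥ e₁ the directional derivative ∂_e u does not change sign in ℝⁿ (i.e., for each such e, either ∂_e u ≥ 0 everywhere or ∂_e u ≤ 0 everywhere), then there exist a function w ∈ C¹(ℝ²) and a unit vector ẽ ⊥ e₁ such that u(x) = w(x₁, x·ẽ) for all x ∈ ℝⁿ, where w is monotone nondecreasing in its second variable. -/

import Mathlib

/- Setting: the double obstacle problem
   Δu = f·χ_{Ω(u)∩{u<ψ}} + Δψ·χ_{Ω(u)∩{u=ψ}},  u ≤ ψ,
   following "Regularity of the free boundary for the double obstacle problem". -/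

open Set Metric MeasureTheory Filter
open scoped RealInnerProductSpace NNReal

noncomputable section

/-- Euclidean space `ℝⁿ`. -/
abbrev E (n : ℕ) := EuclideanSpace ℝ (Fin n)

variable {n : ℕ}

/-- Pointwise Laplacian, via iterated `fderiv` along the coordinate directions
(defined a.e. for `C^{1,1}` functions, junk value elsewhere). -/
def lap (u : E n → ℝ) (x : E n) : ℝ :=
  ∑ i : Fin n, fderiv ℝ (fun y => fderiv ℝ u y (EuclideanSpace.single i 1)) x
    (EuclideanSpace.single i 1)

/-- `Λ(v) = {x ∈ D : v(x) = 0, ∇v(x) = 0}`. -/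
def Lam (D : Set (E n)) (v : E n → ℝ) : Set (E n) :=
  {x ∈ D | v x = 0 ∧ gradient v x = 0}

/-- `Ω(v) = D \ Λ(v)`. -/
def Om (D : Set (E n)) (v : E n → ℝ) : Set (E n) := D \ Lam D v

/-- `Γ(v) = ∂Λ(v) ∩ D`. -/
def Gam (D : Set (E n)) (v : E n → ℝ) : Set (E n) := frontier (Lam D v) ∩ D

/-- `Λ^ψ(u) = {x ∈ D : u(x) = ψ(x)}`. -/
def LamPsi (D : Set (E n)) (u ψ : E n → ℝ) : Set (E n) := {x ∈ D | u x = ψ x}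

/-- `Γ^ψ(u) = ∂Λ^ψ(u) ∩ D`. -/
def GamPsi (D : Set (E n)) (u ψ : E n → ℝ) : Set (E n) := frontier (LamPsi D u ψ) ∩ D

/-- The unit ball `B₁`. -/
def B1 (n : ℕ) : Set (E n) := ball 0 1

/-- The class `P₁(M)`: `f ∈ C^{0,1}(B₁)`, `ψ ∈ C^{1,1}(B₁) ∩ C^{2,1}(closure Ω(ψ))`,
`u ∈ C^{1,1}(B₁)` with `‖D²u‖_{L^∞(B₁)} ≤ M`, `u ≤ ψ` in `B₁`,
`Δu = f·χ_{Ω(u)∩{u<ψ}} + Δψ·χ_{Ω(u)∩{u=ψ}}` a.e. in `B₁`, and `0 ∈ Γ^d(u)`. -/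
structure P1 (n : ℕ) (M : ℝ) (u ψ f : E n → ℝ) : Prop where
  f_lip : ∃ K : ℝ≥0, LipschitzOnWith K f (B1 n)
  psi_c1 : ContDiffOn ℝ 1 ψ (B1 n)
  psi_c11 : ∃ K : ℝ≥0, LipschitzOnWith K (fderiv ℝ ψ) (B1 n)
  psi_c2 : ContDiffOn ℝ 2 ψ (Om (B1 n) ψ)
  psi_c21 : ∃ K : ℝ≥0, LipschitzOnWith K (fderiv ℝ (fderiv ℝ ψ)) (closure (Om (B1 n) ψ))
  u_c1 : ContDiffOn ℝ 1 u (B1 n)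
  u_c11 : LipschitzOnWith (Real.toNNReal M) (fderiv ℝ u) (B1 n)
  u_le : ∀ x ∈ B1 n, u x ≤ ψ x
  u_eq : ∀ᵐ x : E n, x ∈ B1 n →
    lap u x = (Om (B1 n) u ∩ {y | u y < ψ y}).indicator f x
      + (Om (B1 n) u ∩ {y | u y = ψ y}).indicator (lap ψ) x
  zero_mem : (0 : E n) ∈ Gam (B1 n) u ∩ GamPsi (B1 n) u ψ

/-- Minimal diameter: least distance between two parallel hyperplanes whose
enclosed slab contains `A`. -/
def MD (A : Set (E n)) : ℝ :=
  sInf {d : ℝ | 0 ≤ d ∧ ∃ (e : E n) (b : ℝ), ‖e‖ = 1 ∧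
    ∀ x ∈ A, b ≤ ⟪x, e⟫ ∧ ⟪x, e⟫ ≤ b + d}

/-- Thickness `δ_r(v) = MD(Λ(v) ∩ B_r)/r` (centered at the origin). -/
def thick (D : Set (E n)) (v : E n → ℝ) (r : ℝ) : ℝ := MD (Lam D v ∩ ball (0 : E n) r) / r

/- Restricted to `e₁ᗮ`, the differentials `Du(x)` have a common sign on every vector. Two
functionals with that property are proportional with a nonnegative ratio: if `Du(x₀)` vanished
on some `v` with `Du(x) v ≠ 0`, then for `w` with `Du(x₀) w ≠ 0` and a suitable `t`, the two
functionals would take opposite signs at `w + t • v`. So there is a unit `ẽ ⊥ e₁` (the Riesz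
representative of a nonzero `Du(x₀)` on `e₁ᗮ`) with `∂_ẽ u ≥ 0` and `∂_v u = 0` whenever
`v ⊥ e₁, ẽ`; hence `u(x)` depends only on `x₁` and `x · ẽ`. -/

section SignCondition

variable {ι V : Type*}

theorem LinearMap.apply_eq_zero_of_forall_sign [AddCommGroup V] [Module ℝ V]
    {K : Submodule ℝ V} {L : ι → V →ₗ[ℝ] ℝ}
    (hsign : ∀ v ∈ K, (∀ i, 0 ≤ L i v) ∨ (∀ i, L i v ≤ 0))
    {i j : ι} {w v : V} (hwK : w ∈ K) (hvK : v ∈ K) (hiw : L i w ≠ 0) (hiv : L i v = 0) :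
    L j v = 0 := by
  by_contra hjv
  -- `z = w + t • v` has `L i z = L i w` and, for the right `t`, `L j z = - L i w`.
  set t := -(L i w + L j w) / L j v
  have hzK : w + t • v ∈ K := K.add_mem hwK (K.smul_mem t hvK)
  have hi : L i (w + t • v) = L i w := by simp [hiv]
  have hj : L j (w + t • v) = -L i w := by
    simp only [map_add, map_smul, smul_eq_mul, t]
    field_simp
    ring
  have hprod : 0 ≤ L i (w + t • v) * L j (w + t • v) := by
    rcases hsign _ hzK with h | h
    · exact mul_nonneg (h i) (h j)
    · exact mul_nonneg_of_nonpos_of_nonpos (h i) (h j)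
  rw [hi, hj] at hprod
  nlinarith [sq_pos_of_ne_zero hiw]

variable [NormedAddCommGroup V] [InnerProductSpace ℝ V]

theorem forall_sign_of_forall_sign_of_norm_eq_one {K : Submodule ℝ V} {L : ι → V →L[ℝ] ℝ}
    (hsign : ∀ e ∈ K, ‖e‖ = 1 → (∀ i, 0 ≤ L i e) ∨ (∀ i, L i e ≤ 0)) :
    ∀ v ∈ K, (∀ i, 0 ≤ L i v) ∨ (∀ i, L i v ≤ 0) := by
  intro v hvK
  rcases eq_or_ne v 0 with rfl | hv
  · simp
  have hscale : ∀ i, L i v = ‖v‖ * L i (‖v‖⁻¹ • v) := fun i => by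
    rw [map_smul, smul_eq_mul, ← mul_assoc, mul_inv_cancel₀ (norm_ne_zero_iff.mpr hv), one_mul]
  rcases hsign _ (K.smul_mem _ hvK) (norm_smul_inv_norm hv) with h | h
  · exact .inl fun i => hscale i ▸ mul_nonneg (norm_nonneg v) (h i)
  · exact .inr fun i => hscale i ▸ mul_nonpos_of_nonneg_of_nonpos (norm_nonneg v) (h i)

theorem exists_norm_eq_one_forall_apply_eq_zero_of_inner_eq_zero
    (K : Submodule ℝ V) [CompleteSpace K] (hK : K ≠ ⊥) (L : ι → V →L[ℝ] ℝ)
    (hsign : ∀ e ∈ K, ‖e‖ = 1 → (∀ i, 0 ≤ L i e) ∨ (∀ i, L i e ≤ 0)) :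
    ∃ e ∈ K, ‖e‖ = 1 ∧ (∀ i, 0 ≤ L i e) ∧ ∀ i, ∀ v ∈ K, ⟪v, e⟫ = 0 → L i v = 0 := by
  by_cases hzero : ∀ i, ∀ v ∈ K, L i v = 0
  · obtain ⟨v, hvK, hv⟩ := K.exists_mem_ne_zero_of_ne_bot hK
    have heK : ‖v‖⁻¹ • v ∈ K := K.smul_mem _ hvK
    exact ⟨_, heK, norm_smul_inv_norm hv, fun i => (hzero i _ heK).ge,
      fun i v hvK _ => hzero i v hvK⟩
  push Not at hzero
  obtain ⟨i₀, w, hwK, hw⟩ := hzero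
  set g : V := ↑((InnerProductSpace.toDual ℝ K).symm ((L i₀).comp K.subtypeL))
  have hg : ∀ v ∈ K, L i₀ v = ⟪g, v⟫ := fun v hvK => by
    have h := InnerProductSpace.toDual_symm_apply (x := (⟨v, hvK⟩ : K))
      (y := (L i₀).comp K.subtypeL)
    rw [Submodule.coe_inner] at h
    exact h.symm
  have hgK : g ∈ K := Submodule.coe_mem _
  have hg0 : g ≠ 0 := by
    rintro h
    rw [hg w hwK, h, inner_zero_left] at hw
    exact hw rfl
  set e := ‖g‖⁻¹ • g
  have heK : e ∈ K := K.smul_mem _ hgK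
  have hge : L i₀ e = ‖g‖ := by
    rw [hg e heK, real_inner_smul_right, real_inner_self_eq_norm_sq]
    field_simp
  have hi₀e : 0 < L i₀ e := hge ▸ norm_pos_iff.mpr hg0
  refine ⟨e, heK, norm_smul_inv_norm hg0, ?_, ?_⟩
  · rcases hsign e heK (norm_smul_inv_norm hg0) with h | h
    · exact h
    · exact absurd (h i₀) hi₀e.not_ge
  · intro i v hvK hve
    have hi₀v : L i₀ v = 0 := by
      rw [hg v hvK, ← smul_inv_smul₀ (norm_ne_zero_iff.mpr hg0) g, real_inner_smul_left,
        real_inner_comm, hve, mul_zero]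
    exact LinearMap.apply_eq_zero_of_forall_sign
      (L := fun i => (L i : V →ₗ[ℝ] ℝ)) (forall_sign_of_forall_sign_of_norm_eq_one hsign)
      heK hvK hi₀e.ne' hi₀v

end SignCondition

theorem inner_sub_inner_smul_add_inner_smul_left {V : Type*} [NormedAddCommGroup V]
    [InnerProductSpace ℝ V] {a b : V} (x : V) (ha : ‖a‖ = 1) (hba : ⟪b, a⟫ = 0) :
    ⟪x - (⟪x, a⟫ • a + ⟪x, b⟫ • b), a⟫ = 0 := by
  rw [inner_sub_left, inner_add_left, real_inner_smul_left, real_inner_smul_left,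
    real_inner_self_eq_norm_sq, ha, hba]
  ring

section LineDerivative

variable {F G : Type*} [NormedAddCommGroup F] [NormedSpace ℝ F]

theorem hasDerivAt_comp_add_smul [NormedAddCommGroup G] [NormedSpace ℝ G] {u : F → G}
    {y v : F} {t : ℝ} (hu : DifferentiableAt ℝ u (y + t • v)) :
    HasDerivAt (fun t : ℝ => u (y + t • v)) (fderiv ℝ u (y + t • v) v) t := by
  have hline : HasDerivAt (fun t : ℝ => y + t • v) v t := by
    simpa using ((hasDerivAt_id t).smul_const v).const_add y
  exact hu.hasFDerivAt.comp_hasDerivAt t hline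

theorem apply_add_eq_of_fderiv_apply_eq_zero [NormedAddCommGroup G] [NormedSpace ℝ G]
    {u : F → G} (hu : Differentiable ℝ u) {v : F} (hv : ∀ x, fderiv ℝ u x v = 0) (y : F) :
    u (y + v) = u y := by
  have hconst := is_const_of_deriv_eq_zero
    (fun t => (hasDerivAt_comp_add_smul (hu (y + t • v))).differentiableAt)
    (fun t => (hasDerivAt_comp_add_smul (hu (y + t • v))).deriv.trans (hv _)) 1 0
  simpa using hconst

theorem monotone_comp_add_smul_of_fderiv_apply_nonneg {u : F → ℝ} (hu : Differentiable ℝ u)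
    {v : F} (hv : ∀ x, 0 ≤ fderiv ℝ u x v) (y : F) :
    Monotone fun t : ℝ => u (y + t • v) :=
  monotone_of_deriv_nonneg
    (fun t => (hasDerivAt_comp_add_smul (hu (y + t • v))).differentiableAt)
    (fun t => (hasDerivAt_comp_add_smul (hu (y + t • v))).deriv ▸ hv _)

end LineDerivative

/-- If `u ∈ C¹(ℝⁿ)` and for every unit vector `e ⊥ e₁` the directional derivative `∂_e u`
does not change sign, then `u(x) = w(x₁, x·ẽ)` for some `w ∈ C¹(ℝ²)` monotone nondecreasing
in its second variable and some unit vector `ẽ ⊥ e₁`. -/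
theorem two_dimensional_reduction (n : ℕ) (u : E (n + 2) → ℝ) (hu : ContDiff ℝ 1 u)
    (hsign : ∀ e : E (n + 2), ‖e‖ = 1 →
      ⟪e, (EuclideanSpace.single 0 1 : E (n + 2))⟫ = 0 →
      (∀ x, 0 ≤ fderiv ℝ u x e) ∨ (∀ x, fderiv ℝ u x e ≤ 0)) :
    ∃ (w : ℝ → ℝ → ℝ) (e : E (n + 2)), ContDiff ℝ 1 (fun p : ℝ × ℝ => w p.1 p.2) ∧
      ‖e‖ = 1 ∧ ⟪e, (EuclideanSpace.single 0 1 : E (n + 2))⟫ = 0 ∧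
      (∀ x, u x = w (x 0) ⟪x, e⟫) ∧ ∀ s : ℝ, Monotone (w s) := by
  set e₁ : E (n + 2) := EuclideanSpace.single 0 1
  have hmem : ∀ v, v ∈ (ℝ ∙ e₁)ᗮ ↔ ⟪v, e₁⟫ = 0 := fun v =>
    Submodule.mem_orthogonal_singleton_iff_inner_left
  have hK : (ℝ ∙ e₁)ᗮ ≠ ⊥ := (Submodule.ne_bot_iff _).mpr
    ⟨EuclideanSpace.single 1 1, (hmem _).mpr (by simp [e₁, EuclideanSpace.inner_single_right]),
      by simp⟩
  obtain ⟨e, heK, he, hpos, hperp⟩ := exists_norm_eq_one_forall_apply_eq_zero_of_inner_eq_zero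
    _ hK (fderiv ℝ u) fun e heK he => hsign e he ((hmem e).mp heK)
  have hee₁ : ⟪e, e₁⟫ = 0 := (hmem e).mp heK
  have hu' : Differentiable ℝ u := hu.differentiable one_ne_zero
  refine ⟨fun s t => u (s • e₁ + t • e), e, hu.comp (by fun_prop), he, hee₁,
    fun x => ?_, fun s => monotone_comp_add_smul_of_fderiv_apply_nonneg hu' hpos _⟩
  have hx0 : x 0 = ⟪x, e₁⟫ := by simp [e₁, EuclideanSpace.inner_single_right]
  have hxe₁ := inner_sub_inner_smul_add_inner_smul_left x (by simp [e₁] : ‖e₁‖ = 1) hee₁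
  have hxe := inner_sub_inner_smul_add_inner_smul_left x he (real_inner_comm e e₁ ▸ hee₁)
  rw [add_comm (⟪x, e⟫ • e)] at hxe
  set y := ⟪x, e₁⟫ • e₁ + ⟪x, e⟫ • e
  calc u x = u (y + (x - y)) := by rw [add_sub_cancel]
    _ = u (⟪x, e₁⟫ • e₁ + ⟪x, e⟫ • e) :=
      apply_add_eq_of_fderiv_apply_eq_zero hu' (fun z => hperp z _ ((hmem _).mpr hxe₁) hxe) y
    _ = _ := by rw [hx0]
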